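/- The function g : (0, ∞) → ℝ defined by g(x) = e^{1/x} · E₁(1/x), where E₁(t) = ∫_t^∞ e^{-u}/u du, is concave on (0, ∞), i.e., for all x, y ∈ (0, ∞) and all θ ∈ [0, 1], g(θx + (1-θ)y) ≥ θ g(x) + (1-θ) g(y). -/

import Mathlib

open MeasureTheory Real Set

/-- The exponential integral `E₁ t = ∫ u in (t, ∞), e^{-u}/u du`. -/
noncomputable def expIntE1 (t : ℝ) : ℝ := ∫ u in Set.Ioi t, Real.exp (-u) / u

/-!
Substituting `u = s + 1/x` gives `g(x) = ∫₀^∞ e^{-s} x / (1 + s x) ds`. For each fixed `s ≥ 0`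
the map `x ↦ x / (1 + s x)` is concave on `(0, ∞)`, and a nonnegative mixture of concave
functions is concave.
-/

theorem concaveOn_integral {α E : Type*} [MeasurableSpace α] {μ : Measure α}
    [AddCommMonoid E] [Module ℝ E] {D : Set E} {f : α → E → ℝ} (hD : Convex ℝ D)
    (hf : ∀ᵐ a ∂μ, ConcaveOn ℝ D (f a)) (hint : ∀ x ∈ D, Integrable (f · x) μ) :
    ConcaveOn ℝ D fun x => ∫ a, f a x ∂μ := by
  refine ⟨hD, fun x hx y hy θ η hθ hη hθη => ?_⟩
  simp only [smul_eq_mul]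
  rw [← integral_const_mul, ← integral_const_mul,
    ← integral_add ((hint x hx).const_mul θ) ((hint y hy).const_mul η)]
  refine integral_mono_ae (((hint x hx).const_mul θ).add ((hint y hy).const_mul η))
    (hint _ (hD hx hy hθ hη hθη)) ?_
  filter_upwards [hf] with a ha
  exact ha.2 hx hy hθ hη hθη

theorem concaveOn_div_one_add_mul {s : ℝ} (hs : 0 ≤ s) :
    ConcaveOn ℝ (Ici 0) fun x => x / (1 + s * x) := by
  refine ⟨convex_Ici 0, fun x (hx : 0 ≤ x) y (hy : 0 ≤ y) θ η hθ hη hθη => ?_⟩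
  obtain rfl : η = 1 - θ := by linarith
  have hxs : 0 < 1 + s * x := by positivity
  have hys : 0 < 1 + s * y := by positivity
  have hzs : 0 < 1 + s * (θ * x + (1 - θ) * y) := by
    have := mul_nonneg hs (add_nonneg (mul_nonneg hθ hx) (mul_nonneg hη hy))
    linarith
  simp only [smul_eq_mul]
  rw [mul_div_assoc', mul_div_assoc', div_add_div _ _ hxs.ne' hys.ne',
    div_le_div_iff₀ (by positivity) hzs]
  -- the gap is `θ (1 - θ) s (x - y)² / ((1 + s x)(1 + s y)(1 + s z))`, `z = θ x + (1 - θ) y`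
  nlinarith [mul_nonneg (mul_nonneg (mul_nonneg hθ hη) hs) (sq_nonneg (x - y))]

theorem integrableOn_exp_neg_mul_div_one_add_mul {x : ℝ} (hx : 0 ≤ x) :
    IntegrableOn (fun s => exp (-s) * (x / (1 + s * x))) (Ioi 0) := by
  have hexp : IntegrableOn (fun s : ℝ => exp (-s)) (Ioi 0) := by
    simpa using exp_neg_integrableOn_Ioi 0 one_pos
  refine hexp.mul_bdd (c := x) (by fun_prop : Measurable _).aestronglyMeasurable ?_
  filter_upwards [ae_restrict_mem measurableSet_Ioi] with s (hs : 0 < s)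
  rw [norm_of_nonneg (by positivity), div_le_iff₀ (by positivity)]
  nlinarith [mul_nonneg hs.le (mul_nonneg hx hx)]

theorem exp_mul_expIntE1 (t : ℝ) :
    exp t * expIntE1 t = ∫ s in Ioi 0, exp (-s) / (s + t) := by
  have hshift := (measurePreserving_add_right volume t).setIntegral_preimage_emb
    (measurableEmbedding_addRight t) (fun u => exp t * (exp (-u) / u)) (Ioi t)
  rw [preimage_add_const_Ioi, sub_self] at hshift
  rw [expIntE1, ← integral_const_mul, ← hshift]
  congr 1 with s
  rw [← mul_div_assoc, ← exp_add]
  ring_nf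

theorem exp_inv_mul_expIntE1_inv {x : ℝ} (hx : 0 < x) :
    exp (1 / x) * expIntE1 (1 / x) = ∫ s in Ioi 0, exp (-s) * (x / (1 + s * x)) := by
  rw [exp_mul_expIntE1]
  refine setIntegral_congr_fun measurableSet_Ioi fun s (hs : 0 < s) => ?_
  field_simp
  ring

theorem concaveOn_exp_inv_mul_expIntE1_inv :
    ConcaveOn ℝ (Ioi 0) fun x => exp (1 / x) * expIntE1 (1 / x) := by
  refine (concaveOn_integral (convex_Ioi 0) ?_ fun x (hx : 0 < x) =>
    integrableOn_exp_neg_mul_div_one_add_mul hx.le).congr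
    fun x hx => (exp_inv_mul_expIntE1_inv hx).symm
  filter_upwards [ae_restrict_mem measurableSet_Ioi] with s (hs : 0 < s)
  exact ((concaveOn_div_one_add_mul hs.le).subset Ioi_subset_Ici_self (convex_Ioi 0)).smul
    (exp_pos (-s)).le

/-- The function `g(x) = e^{1/x} E₁(1/x)` is concave on `(0, ∞)`: for all `x, y > 0`
and `θ ∈ [0,1]`, `g(θx + (1-θ)y) ≥ θ g(x) + (1-θ) g(y)`. -/
theorem stmt_2 :
    ∀ x ∈ Set.Ioi (0 : ℝ), ∀ y ∈ Set.Ioi (0 : ℝ), ∀ θ : ℝ, 0 ≤ θ → θ ≤ 1 →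
      θ * (Real.exp (1 / x) * expIntE1 (1 / x))
        + (1 - θ) * (Real.exp (1 / y) * expIntE1 (1 / y))
      ≤ Real.exp (1 / (θ * x + (1 - θ) * y)) * expIntE1 (1 / (θ * x + (1 - θ) * y)) :=
  fun _ hx _ hy θ hθ hθ1 =>
    concaveOn_exp_inv_mul_expIntE1_inv.2 hx hy hθ (sub_nonneg.2 hθ1) (add_sub_cancel θ 1)
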